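/- (Property (*1): typical pebbles in a common tile have equal types) Let k>1 and α∈(3/4,1] be such that k^{1−α} is a positive integer, let Δ be a cube of side k/2 partitioned into k^{3(1−α)} pebbles (axis-aligned cubes of side k^α/2), and let P be a finite configuration of pairwise non-intersecting plates with centers in Δ. Call a pebble typical of type i if it contains the centers of at least two plates of P of type i with different orientations. If two pebbles δ and δ' both lie in a common tile of Δ (for some direction d∈{1,2,3}, a tile is the k/2 × k/2 × k^α/2 slab of Δ consisting of all pebbles in a fixed layer orthogonal to axis d), and δ is typical of type i while δ' is typical of type i', then i = i'. -/

import Mathlib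

open MeasureTheory Filter

attribute [local instance] Classical.propDecidable

noncomputable section

/-! ## Basic geometry of hard plates -/

/-- a point of `ℝ³` -/
abbrev Pt : Type := Fin 3 → ℝ

/-- an orientation: a type `i ∈ {1,2,3}` together with one of the two
assignments (`a` = `true`, `b` = `false`) of the sides `k^α` and `k`
to the two axes orthogonal to `i` -/
abbrev Orient : Type := Fin 3 × Bool

/-- a plate: a center together with an orientation -/
abbrev Plate : Type := Pt × Orient

/-- a block index in `ℤ³` -/
abbrev I3 : Type := Fin 3 → ℤ

/-- the side length, along the coordinate axis `j`, of a `1 × k^α × k` plate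
with orientation `o`: side `1` along the axis `o.1`, and sides `k^α`, `k`
along the two other axes, in one of the two possible ways according to `o.2`. -/
def sideLen (k α : ℝ) (o : Orient) (j : Fin 3) : ℝ :=
  if j = o.1 then 1
  else if j = o.1 + 1 then (if o.2 then k ^ α else k)
  else if o.2 then k else k ^ α

/-- the support `R_p` of a plate: the closed axis-aligned box centered at the
center of the plate, with side lengths `1, k^α, k` as prescribed by its orientation -/
def plSupport (k α : ℝ) (p : Plate) : Set Pt :=
  {y | ∀ j, |y j - p.1 j| ≤ sideLen k α p.2 j / 2}

/-- two plates intersect if their supports do -/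
def Intersects (k α : ℝ) (p p' : Plate) : Prop :=
  (plSupport k α p ∩ plSupport k α p').Nonempty

/-- hard-core pair interaction `φ(p,p')` -/
def phi2 (k α : ℝ) (p p' : Plate) : ℝ := if Intersects k α p p' then 0 else 1

/-- hard-core factor `φ(p_1,…,p_n) = ∏_{i<j} φ(p_i,p_j)` of a finite plate
configuration, given as a list -/
def phiL (k α : ℝ) : List Plate → ℝ
  | [] => 1
  | p :: ps => (ps.map (fun p' => phi2 k α p p')).prod * phiL k α ps

/-- hard-core interaction between two configurations -/
def crossL (k α : ℝ) (P Q : List Plate) : ℝ :=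
  (P.map (fun p => (Q.map (fun p' => phi2 k α p p')).prod)).prod

/-- the plate configuration built from centers `x` and orientations `o` -/
def mkConf {n : ℕ} (x : Fin n → Pt) (o : Fin n → Orient) : List Plate :=
  List.ofFn (fun m => (x m, o m))

/-- the Ursell function `φ^T(p_1,…,p_n)`: the sum over connected graphs on the
`n` labelled vertices (encoded by their edge sets, listed with `e.1 < e.2`) of
`∏_{{j,j'} ∈ E(g)} (φ(p_j,p_{j'}) - 1)`.  It equals `1` for `n = 1` and
vanishes for `n = 0`. -/
def ursell (k α : ℝ) {n : ℕ} (p : Fin n → Plate) : ℝ :=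
  ∑ E : Finset (Fin n × Fin n),
    if (∀ e ∈ E, e.1 < e.2) ∧ (SimpleGraph.fromRel (fun i j => (i, j) ∈ E)).Connected then
      ∏ e ∈ E, (phi2 k α (p e.1) (p e.2) - 1)
    else 0

/-- the two orientations of type `q` -/
def typeOrients (q : Fin 3) : Finset Orient := {(q, true), (q, false)}

/-! ## Partition functions of uniform systems -/

/-- grand-canonical partition function at activity `z` of plates with centers
in `S` and orientations in the finite set `O`:
`1 + ∑_{n≥1} (z^n/n!) ∫_{S^n} ∑_{orientations} φ(p_1,…,p_n)`
(the `n = 0` term of the series equals `1`). -/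
def ZGen (k α z : ℝ) (S : Set Pt) (O : Finset Orient) : ℝ :=
  ∑' n : ℕ, (z ^ n / (Nat.factorial n : ℝ)) *
    ∫ x : Fin n → Pt in Set.univ.pi (fun _ => S),
      ∑ o : Fin n → {a // a ∈ O}, phiL k α (mkConf x (fun m => (o m).1))

/-- partition function of plate configurations in `S` containing at least two
plates of different types -/
def Zge2 (k α z : ℝ) (S : Set Pt) : ℝ :=
  ∑' n : ℕ, (z ^ n / (Nat.factorial n : ℝ)) *
    ∫ x : Fin n → Pt in Set.univ.pi (fun _ => S),
      ∑ o : Fin n → Orient,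
        (if ∃ i j : Fin n, (o i).1 ≠ (o j).1 then phiL k α (mkConf x o) else 0)

/-- the closed axis-aligned cube with center `c` and side `s` -/
def cube (c : Pt) (s : ℝ) : Set Pt := {y | ∀ j, |y j - c j| ≤ s / 2}

/-- partition function of plate configurations with centers in `A ∪ B`, all
plates with center in `A` being of type `i` and all other plates of type `j` -/
def Zpair (k α z : ℝ) (i j : Fin 3) (A B : Set Pt) : ℝ :=
  ∑' n : ℕ, (z ^ n / (Nat.factorial n : ℝ)) *
    ∫ x : Fin n → Pt in Set.univ.pi (fun _ => A ∪ B),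
      ∑ b : Fin n → Bool,
        phiL k α (mkConf x (fun m => ((if x m ∈ A then i else j), b m)))

/-- `Z^{≥2}(Δ₁ ∪ Δ₂)` for a dipole: sum over pairs of distinct types -/
def Zdip (k α z : ℝ) (A B : Set Pt) : ℝ :=
  ∑ i : Fin 3, ∑ j : Fin 3, if i ≠ j then Zpair k α z i j A B else 0

/-! ## Pebbles -/

/-- the pebble with index `v` in the cube of corner `c` paved by cubes of
side `k^α/2` -/
def pebbleBox (k α : ℝ) {M : ℕ} (c : Pt) (v : Fin 3 → Fin M) : Set Pt :=
  {y | ∀ j, c j + (k ^ α / 2) * ((v j : ℕ) : ℝ) ≤ y j ∧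
            y j ≤ c j + (k ^ α / 2) * (((v j : ℕ) : ℝ) + 1)}

/-- a pebble is typical of type `i` if it contains the centers of at least two
plates of `P` of type `i` with different orientations -/
def TypicalIn (k α : ℝ) {M : ℕ} (c : Pt) (P : Finset Plate) (v : Fin 3 → Fin M)
    (i : Fin 3) : Prop :=
  ∃ p ∈ P, ∃ p' ∈ P, p.2 ≠ p'.2 ∧ p.2.1 = i ∧ p'.2.1 = i ∧
    p.1 ∈ pebbleBox k α c v ∧ p'.1 ∈ pebbleBox k α c v

/-- a pebble is atypical if it does not contain the centers of two plates of
`P` with different orientations -/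
def AtypicalIn (k α : ℝ) {M : ℕ} (c : Pt) (P : Finset Plate) (v : Fin 3 → Fin M) : Prop :=
  ¬ ∃ p ∈ P, ∃ p' ∈ P, p.2 ≠ p'.2 ∧ p.1 ∈ pebbleBox k α c v ∧ p'.1 ∈ pebbleBox k α c v

/-! ## Blocks, spins and conditioned partition functions -/

/-- the index of the (half-open) block of side `l` containing `x` -/
def blockIdx (l : ℝ) (x : Pt) : I3 := fun j => ⌊x j / l⌋

/-- the region of `ℝ³` paved by the blocks of side `ℓ = k/2` with indices in `B` -/
def regionOf (k : ℝ) (B : Finset I3) : Set Pt := {x | blockIdx (k / 2) x ∈ B}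

/-- the closed region paved by the blocks with indices in `Y` -/
def regionClosed (k : ℝ) (Y : Finset I3) : Set Pt :=
  {x | ∃ ξ ∈ Y, ∀ j, (k / 2) * (ξ j : ℝ) ≤ x j ∧ x j ≤ (k / 2) * ((ξ j : ℝ) + 1)}

/-- the block `ξ` is within rescaled `L^∞`-distance `r` of the complement of `B` -/
def nearBoundary (B : Finset I3) (r : ℤ) (ξ : I3) : Prop :=
  ∃ η : I3, η ∉ B ∧ ∀ j, |ξ j - η j| ≤ r

/-- the spin value (in `{0,1,2,3,4}`) corresponding to the plate type `i` -/
def spinOfType (i : Fin 3) : Fin 5 := ⟨i.1 + 1, by have := i.isLt; omega⟩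

/-- the weight of the block `ξ` carrying the spin `s` in the presence of the
plate configuration `P`: empty blocks get weight `1`, `-2`, `0` for
`s ∈ {1,2,3}`, `s = 0`, `s = 4` respectively, and nonempty blocks enforce the
compatibility of the plates they contain with the spin `s`. -/
def blockWeightL (l : ℝ) (P : List Plate) (ξ : I3) (s : Fin 5) : ℝ :=
  if ∀ p ∈ P, blockIdx l p.1 ≠ ξ then
    (if s = 0 then -2 else if s = 4 then 0 else 1)
  else if s = 4 then
    (if ∃ p ∈ P, ∃ p' ∈ P, blockIdx l p.1 = ξ ∧ blockIdx l p'.1 = ξ ∧ p.2.1 ≠ p'.2.1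
     then 1 else 0)
  else if ∃ i : Fin 3, s = spinOfType i ∧ ∀ p ∈ P, blockIdx l p.1 = ξ → p.2.1 = i
    then 1 else 0

/-- total compatibility weight of a plate configuration with a spin configuration -/
def confWeightL (l : ℝ) (B : Finset I3) (σ : I3 → Fin 5) (P : List Plate) : ℝ :=
  ∏ ξ ∈ B, blockWeightL l P ξ (σ ξ)

/-- extension (by `0`) of a spin configuration on `B` to all of `ℤ³` -/
def extFn (B : Finset I3) (σ : {ξ // ξ ∈ B} → Fin 5) : I3 → Fin 5 :=
  fun ξ => if h : ξ ∈ B then σ ⟨ξ, h⟩ else 0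

/-- indicator of the `q`-boundary condition: the spin equals `q` on every block
within rescaled `L^∞`-distance `8` of the complement of `B` -/
def bcWeight (B : Finset I3) (q : Fin 3) (σ : {ξ // ξ ∈ B} → Fin 5) : ℝ :=
  if ∀ ξ : {ξ // ξ ∈ B}, nearBoundary B 8 ξ.1 → σ ξ = spinOfType q then 1 else 0

/-- the partition function with `q`-boundary conditions on the union `Λ` of the
blocks indexed by `B`, with plate centers restricted to `Λ ∖ V` and with the
additional hard-core constraint that plates must not intersect the plates of
the fixed configuration `Pc`:
`Z = ∑_{σ ∈ Θ^q} ∫_{Ω_Λ(σ)} dP φ(P) z^{|P|} ∏_{p ∈ P, p' ∈ Pc} φ(p,p')`. -/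
def ZBCgen (k α z : ℝ) (B : Finset I3) (V : Set Pt) (q : Fin 3) (Pc : List Plate) : ℝ :=
  ∑ σ : {ξ // ξ ∈ B} → Fin 5,
    bcWeight B q σ *
      ∑' n : ℕ, (z ^ n / (Nat.factorial n : ℝ)) *
        ∫ x : Fin n → Pt in Set.univ.pi (fun _ => regionOf k B \ V),
          ∑ o : Fin n → Orient,
            confWeightL (k / 2) B (extFn B σ) (mkConf x o) * phiL k α (mkConf x o) *
              crossL k α (mkConf x o) Pc

/-- the `n`-point correlation function with `q`-boundary conditions,
`ρ_n^{(q,Λ)}(p_1,…,p_n) = Z(Λ|q)^{-1} ∑_{σ∈Θ^q} ∫_{Ω_Λ(σ)} dP z^{|P|+n} φ((p_1,…,p_n) ∪ P)` -/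
def corrBC (k α z : ℝ) (B : Finset I3) (V : Set Pt) (q : Fin 3) (Ps : List Plate) : ℝ :=
  (ZBCgen k α z B V q [])⁻¹ * z ^ Ps.length * phiL k α Ps * ZBCgen k α z B V q Ps

/-- an increasing sequence of cubic boxes invading `ℝ³`, each consisting of
`(8(m+1)-2)³` blocks (so that `L + 2ℓ` is divisible by `8ℓ`) -/
def boxB0 (m : ℕ) : Finset I3 :=
  Finset.Icc (fun _ => -(4 * (m : ℤ) + 3)) (fun _ => 4 * (m : ℤ) + 2)

/-- the cubic box with `(8m-2)³` blocks, aligned with the lattice of smoothing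
cubes (which exceed it by one block on each side) -/
def boxBm (m : ℕ) : Finset I3 :=
  Finset.Icc (fun _ => (-1 : ℤ)) (fun _ => 8 * (m : ℤ) - 4)

/-- `ε = max{(zk²)^{c₁}, e^{-c₂ z k^{2+α}}}` -/
def epsParam (k α z c1 c2 : ℝ) : ℝ :=
  max ((z * k ^ 2) ^ c1) (Real.exp (-(c2 * z * k ^ (2 + α))))

/-! ## Contours -/

/-- `D`-adjacency of blocks: distinct and touching on a face, an edge or a corner -/
def adjD (ξ η : I3) : Prop := ξ ≠ η ∧ ∀ j, |ξ j - η j| ≤ 1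

/-- reachability within a set of blocks through `D`-adjacency steps -/
def ReachIn (S : Finset I3) (ξ η : I3) : Prop :=
  Relation.ReflTransGen (fun a b => a ∈ S ∧ b ∈ S ∧ adjD a b) ξ η

/-- a nonempty `D`-connected set of blocks -/
def DConn (S : Finset I3) : Prop := S.Nonempty ∧ ∀ ξ ∈ S, ∀ η ∈ S, ReachIn S ξ η

/-- `Γ` is a `D`-connected component of `S` -/
def IsDComponent (S Γ : Finset I3) : Prop :=
  Γ ⊆ S ∧ DConn Γ ∧ ∀ ξ ∈ Γ, ∀ η ∈ S, adjD ξ η → η ∈ Γ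

/-- two sets of blocks are `D`-disconnected -/
def DDisj (A B : Finset I3) : Prop := ∀ ξ ∈ A, ∀ η ∈ B, ξ ≠ η ∧ ¬ adjD ξ η

/-- the combinatorial datum of a contour: its support (a set of blocks) and its
spin configuration (normalized to `0` outside the support) -/
structure Skeleton where
  Γ : Finset I3
  σ : I3 → Fin 5

/-- the blocks of the smoothing cube (of side `8ℓ`) with index `a` -/
def smoothBlocks (a : I3) : Finset I3 :=
  Finset.Icc (fun j => 8 * a j - 2) (fun j => 8 * a j + 5)

/-- the index of the smoothing cube containing the block `η` -/
def smoothIdx (η : I3) : I3 := fun j => Int.fdiv (η j + 2) 8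

/-- the sampling cube `S_ξ` (the `8` blocks `η` with `η j - ξ j ∈ {0,1}`) is
good: all its spins are equal and lie in `{1,2,3}` -/
def sampGood (B : Finset I3) (σ : I3 → Fin 5) (ξ : I3) : Prop :=
  ∃ i : Fin 3, ∀ η ∈ B, (∀ j, η j = ξ j ∨ η j = ξ j + 1) → σ η = spinOfType i

/-- the union `B(σ)` of the bad sampling cubes -/
def badBlocks (B : Finset I3) (σ : I3 → Fin 5) : Finset I3 :=
  B.filter (fun η => ∃ ξ ∈ B, ¬ sampGood B σ ξ ∧ ∀ j, η j = ξ j ∨ η j = ξ j + 1)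

/-- the union `B_s(σ)` of the smoothing cubes intersecting `B(σ)` -/
def smoothedBad (B : Finset I3) (σ : I3 → Fin 5) : Finset I3 :=
  (badBlocks B σ).biUnion (fun η => smoothBlocks (smoothIdx η))

/-- the bad region `B̄(σ)`: `B_s(σ)` together with all blocks at rescaled
`L^∞`-distance `≤ 1` from it -/
def barB (B : Finset I3) (σ : I3 → Fin 5) : Finset I3 :=
  B.filter (fun ξ => ∃ η ∈ smoothedBad B σ, ∀ j, |ξ j - η j| ≤ 1)

/-- the exterior of `Γ` in `B`: the blocks of `B ∖ Γ` connected to the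
boundary layer of `B` -/
def extBlocks (B Γ : Finset I3) : Finset I3 :=
  (B \ Γ).filter (fun ξ => ∃ η ∈ B \ Γ, nearBoundary B 1 η ∧ ReachIn (B \ Γ) ξ η)

/-- the interiors of `Γ` in `B`: the connected components of `B ∖ Γ` not
touching the boundary of `B` -/
def interiorsSet (B Γ : Finset I3) : Set (Finset I3) :=
  {A | IsDComponent (B \ Γ) A ∧ ∀ ξ ∈ A, ¬ nearBoundary B 1 ξ}

/-- the internal magnetization of the contour `s` on the interior `A`: the
common type prescribed by the spins of `s` on the layer of `Γ` adjacent to `A` -/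
def intMag (s : Skeleton) (A : Finset I3) : Fin 3 :=
  if h : ∃ i : Fin 3, ∀ ξ ∈ s.Γ, (∃ η ∈ A, adjD ξ η) → s.σ ξ = spinOfType i
  then h.choose else 0

/-- the external magnetization of the contour `s` is `q` -/
def extMagIs (B : Finset I3) (s : Skeleton) (q : Fin 3) : Prop :=
  ∀ ξ ∈ s.Γ, (∃ η ∈ extBlocks B s.Γ, adjD ξ η) → s.σ ξ = spinOfType q

/-- the skeleton `s` is a possible contour in `Λ` (associated to the block set
`B`) with `q`-boundary conditions: it arises from a spin configuration
`τ ∈ Θ^q` admitting a compatible plate configuration, as a `D`-connected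
component of the bad region `B̄(τ)`, with matching spins. -/
def PossibleSkel (k α : ℝ) (B : Finset I3) (q : Fin 3) (s : Skeleton) : Prop :=
  (∀ ξ, ξ ∉ s.Γ → s.σ ξ = 0) ∧
  ∃ τ : I3 → Fin 5,
    (∀ ξ ∈ B, nearBoundary B 8 ξ → τ ξ = spinOfType q) ∧
    (∃ P : List Plate, (∀ p ∈ P, p.1 ∈ regionOf k B) ∧
       confWeightL (k / 2) B τ P * phiL k α P ≠ 0) ∧
    IsDComponent (barB B τ) s.Γ ∧ (∀ ξ ∈ s.Γ, s.σ ξ = τ ξ)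

/-- the sub-configuration of the plates of `P` belonging to `Γ` -/
def restrictConf (l : ℝ) (Γ : Finset I3) (P : List Plate) : List Plate :=
  P.filter (fun p => decide (blockIdx l p.1 ∈ Γ))

/-- the function `F_γ(P)` for the contour with support `Γ` and plate
configuration `Pγ`: equal to `1` if `P` contains a plate belonging to `Λ ∖ Γ`
and a plate belonging to `Γ`, or a plate belonging to `Ext Γ` intersecting a
plate of `Pγ`; `0` otherwise. -/
def FgamL (k α : ℝ) (B Γ : Finset I3) (Pγ PQ : List Plate) : ℝ :=
  if (∃ p1 ∈ PQ, ∃ p2 ∈ PQ, blockIdx (k / 2) p1.1 ∉ Γ ∧ blockIdx (k / 2) p2.1 ∈ Γ) ∨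
     (∃ p1 ∈ PQ, blockIdx (k / 2) p1.1 ∈ extBlocks B Γ ∧ ∃ p2 ∈ Pγ, Intersects k α p1 p2)
  then 1 else 0

/-- `∫_{Ω^q_Λ} dP φ^T(P) z^{|P|} F_γ(P)`, the exponent of the dressing factor
of the contour activity -/
def dressInt (k α z : ℝ) (B : Finset I3) (q : Fin 3) (Γ : Finset I3) (Pγ : List Plate) : ℝ :=
  ∑' n : ℕ, (z ^ (n + 1) / (Nat.factorial (n + 1) : ℝ)) *
    ∫ x : Fin (n + 1) → Pt in Set.univ.pi (fun _ => regionOf k B),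
      ∑ b : Fin (n + 1) → Bool,
        ursell k α (fun m => (x m, (q, b m))) *
          FgamL k α B Γ Pγ (mkConf x (fun m => (q, b m)))

/-- the activity `ζ_q^{(Λ)}(γ)` of the contour `γ = (Γ, σ_γ, Pγ)`:
`(z^{|Pγ|} φ(Pγ)/Z^q(Γ)) ∏_j (Z^{(γ)}(Int_j Γ|m^j)/Z(Int_j Γ|q)) e^{-∫ φ^T z^{|P|} F_γ}` -/
def zetaL (k α z : ℝ) (B : Finset I3) (q : Fin 3) (s : Skeleton) (Pγ : List Plate) : ℝ :=
  (z ^ Pγ.length * phiL k α Pγ / ZGen k α z (regionOf k s.Γ) (typeOrients q)) *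
  (∏ᶠ A ∈ interiorsSet B s.Γ,
     ZBCgen k α z A ∅ (intMag s A) Pγ / ZBCgen k α z A ∅ q []) *
  Real.exp (-(dressInt k α z B q s.Γ Pγ))

/-- `∑_{n≥2} ((-1)^n/n!) ∑*_{γ_1,…,γ_n ∈ ∂ distinct} F_{γ_1}(P) ⋯ F_{γ_n}(P)`,
where the plate configuration of each contour is the restriction of `Pfull` to
its support -/
def multiF (k α : ℝ) (B : Finset I3) (D : Finset Skeleton) (Pfull Pq : List Plate) : ℝ :=
  ∑ r ∈ Finset.range (D.card + 1),
    if 2 ≤ r then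
      ((-1 : ℝ) ^ r / (Nat.factorial r : ℝ)) *
        ∑ g : Fin r → {s // s ∈ D},
          (if Function.Injective g then
            ∏ i : Fin r,
              FgamL k α B (g i).1.Γ (restrictConf (k / 2) (g i).1.Γ Pfull) Pq
          else 0)
    else 0

/-- the multi-contour interaction `W^{(Λ)}(∂)` -/
def Wfun (k α z : ℝ) (B : Finset I3) (q : Fin 3) (D : Finset Skeleton)
    (Pfull : List Plate) : ℝ :=
  ∑' n : ℕ, (z ^ (n + 1) / (Nat.factorial (n + 1) : ℝ)) *
    ∫ x : Fin (n + 1) → Pt in Set.univ.pi (fun _ => regionOf k B),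
      ∑ b : Fin (n + 1) → Bool,
        ursell k α (fun m => (x m, (q, b m))) *
          multiF k α B D Pfull (mkConf x (fun m => (q, b m)))

/-- a collection of possible contours, with pairwise `D`-disconnected supports,
all of whose external magnetizations equal `q` -/
def GoodContourConfig (k α : ℝ) (B : Finset I3) (q : Fin 3) (D : Finset Skeleton) : Prop :=
  (∀ s ∈ D, PossibleSkel k α B q s ∧ extMagIs B s q) ∧
  (∀ s ∈ D, ∀ t ∈ D, s ≠ t → DDisj s.Γ t.Γ)

/-- the sum `∑_{∂ ∈ C(Λ,q)} (∏_{γ∈∂} ζ_q^{(Λ)}(γ)) e^{W^{(Λ)}(∂)}` over contour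
configurations, the sum including the integration over the plate
configurations inside the contour supports -/
def contourSum (k α z : ℝ) (B : Finset I3) (q : Fin 3) : ℝ :=
  ∑ᶠ D ∈ {D : Finset Skeleton | D.Nonempty ∧ GoodContourConfig k α B q D},
    ∑' n : ℕ, (1 / (Nat.factorial n : ℝ)) *
      ∫ x : Fin n → Pt in Set.univ.pi (fun _ => regionOf k (D.biUnion Skeleton.Γ)),
        ∑ o : Fin n → Orient,
          (∏ s ∈ D,
            confWeightL (k / 2) s.Γ s.σ (restrictConf (k / 2) s.Γ (mkConf x o)) *
              zetaL k α z B q s (restrictConf (k / 2) s.Γ (mkConf x o))) *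
            Real.exp (Wfun k α z B q D (mkConf x o))

/-! ## Polymers -/

/-- the single-contour part `K_{q,1}^{(Λ)}(X)` of the polymer activity -/
def K1 (k α z : ℝ) (B : Finset I3) (q : Fin 3) (X : Finset I3) : ℝ :=
  ∑ᶠ s ∈ {s : Skeleton | PossibleSkel k α B q s ∧ extMagIs B s q ∧ s.Γ = X},
    ∑' n : ℕ, (1 / (Nat.factorial n : ℝ)) *
      ∫ x : Fin n → Pt in Set.univ.pi (fun _ => regionOf k X),
        ∑ o : Fin n → Orient,
          confWeightL (k / 2) X s.σ (mkConf x o) * zetaL k α z B q s (mkConf x o)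

/-- `𝕀_Y(P)`: `Y` is the smallest `D`-connected union of blocks containing the
supports of all plates of `P` -/
def IndY (k α : ℝ) (Y : Finset I3) (P : List Plate) : ℝ :=
  if DConn Y ∧ (∀ p ∈ P, plSupport k α p ⊆ regionClosed k Y) ∧
      (∀ Y' : Finset I3, Y' ⊆ Y → DConn Y' →
        (∀ p ∈ P, plSupport k α p ⊆ regionClosed k Y') → Y' = Y)
  then 1 else 0

/-- the localized multi-contour interaction `F_∂(Y)` -/
def Fcal (k α z : ℝ) (B : Finset I3) (q : Fin 3) (D : Finset Skeleton)
    (Pfull : List Plate) (Y : Finset I3) : ℝ :=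
  ∑' n : ℕ, (z ^ (n + 1) / (Nat.factorial (n + 1) : ℝ)) *
    ∫ x : Fin (n + 1) → Pt in Set.univ.pi (fun _ => regionOf k B),
      ∑ b : Fin (n + 1) → Bool,
        ursell k α (fun m => (x m, (q, b m))) *
          multiF k α B D Pfull (mkConf x (fun m => (q, b m))) *
          IndY k α Y (mkConf x (fun m => (q, b m)))

/-- `∑_{p≥1} (1/p!) ∑*_{Y_1,…,Y_p ∈ 𝔅^T(X) distinct, ∪Y_j = X₁} ∏_j (e^{F_∂(Y_j)} - 1)` -/
def Ysum (k α z : ℝ) (B : Finset I3) (q : Fin 3) (D : Finset Skeleton)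
    (X X1 : Finset I3) (Pfull : List Plate) : ℝ :=
  ∑' p : ℕ, (1 / (Nat.factorial (p + 1) : ℝ)) *
    ∑ Ys : Fin (p + 1) → {A // A ∈ X.powerset},
      (if Function.Injective Ys ∧ (∀ i, DConn (Ys i).1) ∧
          Finset.univ.sup (fun i => (Ys i).1) = X1
       then ∏ i, (Real.exp (Fcal k α z B q D Pfull (Ys i).1) - 1)
       else 0)

/-- the multi-contour part `K_{q,≥2}^{(Λ)}(X)` of the polymer activity -/
def Kge2 (k α z : ℝ) (B : Finset I3) (q : Fin 3) (X : Finset I3) : ℝ :=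
  ∑ X0 ∈ X.powerset, ∑ X1 ∈ X.powerset,
    (if X0 ∪ X1 = X then (1 : ℝ) else 0) *
      ∑ᶠ D ∈ {D : Finset Skeleton | 2 ≤ D.card ∧ GoodContourConfig k α B q D ∧
                D.biUnion Skeleton.Γ = X0},
        ∑' n : ℕ, (1 / (Nat.factorial n : ℝ)) *
          ∫ x : Fin n → Pt in Set.univ.pi (fun _ => regionOf k X0),
            ∑ o : Fin n → Orient,
              (∏ s ∈ D,
                confWeightL (k / 2) s.Γ s.σ (restrictConf (k / 2) s.Γ (mkConf x o)) *
                  zetaL k α z B q s (restrictConf (k / 2) s.Γ (mkConf x o))) *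
                Ysum k α z B q D X X1 (mkConf x o)

/-- the polymer activity `K_q^{(Λ)}(X) = K_{q,1}^{(Λ)}(X) + K_{q,≥2}^{(Λ)}(X)` -/
def Kpoly (k α z : ℝ) (B : Finset I3) (q : Fin 3) (X : Finset I3) : ℝ :=
  K1 k α z B q X + Kge2 k α z B q X

/-- the polymers of `Λ`: the nonempty `D`-connected unions of blocks of `B` -/
def polymers (B : Finset I3) : Finset (Finset I3) :=
  B.powerset.filter (fun A => DConn A)

/-- hard-core polymer interaction: `1` if `D`-disconnected, `0` otherwise -/
def polyPhi2 (A B : Finset I3) : ℝ := if DDisj A B then 1 else 0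

/-- the polymer Ursell function `φ^T(X_1,…,X_r)` -/
def polyUrsell {r : ℕ} (Xs : Fin r → Finset I3) : ℝ :=
  ∑ E : Finset (Fin r × Fin r),
    if (∀ e ∈ E, e.1 < e.2) ∧ (SimpleGraph.fromRel (fun i j => (i, j) ∈ E)).Connected then
      ∏ e ∈ E, (polyPhi2 (Xs e.1) (Xs e.2) - 1)
    else 0

/-- `∫_{Ω_Γ(σ_γ)} dP_γ |ζ_q^{(Λ)}(γ)|` -/
def contourAbsInt (k α z : ℝ) (B : Finset I3) (q : Fin 3) (s : Skeleton) : ℝ :=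
  ∑' n : ℕ, (1 / (Nat.factorial n : ℝ)) *
    ∫ x : Fin n → Pt in Set.univ.pi (fun _ => regionOf k s.Γ),
      ∑ o : Fin n → Orient,
        |confWeightL (k / 2) s.Γ s.σ (mkConf x o) * zetaL k α z B q s (mkConf x o)|

/-- `∫_{Ω_Γ(σ_γ)} dP_γ z^{|P_γ|} φ(P_γ) / Z^q(Γ)` -/
def contourPlateWeight (k α z : ℝ) (q : Fin 3) (s : Skeleton) : ℝ :=
  (∑' n : ℕ, (z ^ n / (Nat.factorial n : ℝ)) *
    ∫ x : Fin n → Pt in Set.univ.pi (fun _ => regionOf k s.Γ),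
      ∑ o : Fin n → Orient,
        confWeightL (k / 2) s.Γ s.σ (mkConf x o) * phiL k α (mkConf x o)) /
  ZGen k α z (regionOf k s.Γ) (typeOrients q)

/-- the admissible regions `𝔉nt`: connected regions obtained from a union of
smoothing cubes by removing all blocks at rescaled `L^∞`-distance `1` from the
complement -/
def Fnt : Set (Finset I3) :=
  {B | ∃ A : Finset I3, A.Nonempty ∧
        B = (A.biUnion smoothBlocks).filter
              (fun ξ => ¬ nearBoundary (A.biUnion smoothBlocks) 1 ξ) ∧
        DConn B}

/-- the one-point function of the pure type-`q` plate gas in `S`: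
`Z^q(S)^{-1} ∫_{Ω^q_S} dP z^{|P|+1} φ({p₀} ∪ P)` -/
def corrPure (k α z : ℝ) (S : Set Pt) (q : Fin 3) (p₀ : Plate) : ℝ :=
  (ZGen k α z S (typeOrients q))⁻¹ *
    ∑' n : ℕ, (z ^ (n + 1) / (Nat.factorial n : ℝ)) *
      ∫ x : Fin n → Pt in Set.univ.pi (fun _ => S),
        ∑ b : Fin n → Bool, phiL k α (p₀ :: mkConf x (fun m => (q, b m)))

end

/-!
A typical pebble of type `i` contains plates of both orientations of type `i`, so we may pick a
plate of type `i` in `δ` and one of type `i'` in `δ'` whose long sides (of length `k`) lie along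
the two axes other than `d`. Being disjoint, these plates are separated along some axis; as their
centers lie in `Δ`, of side `k/2`, it cannot be a long axis of either, so it is `d`. But along `d`
the two centers lie in one layer of width `k^α/2`, while the half-sides of the plates along `d`
add up to more than that, since at most one of the two plates has its side `1` along `d`.
-/

/-- The axis along which a plate with orientation `o` has side `k`. -/
def longAxis (o : Orient) : Fin 3 := o.1 + if o.2 then 2 else 1

lemma exists_longAxis_ne_eq (i i' d : Fin 3) (h : i ≠ i') :
    ∃ b b' : Bool, ∀ j, j ≠ longAxis (i, b) → j ≠ longAxis (i', b') → j = d := by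
  revert i i' d
  unfold longAxis
  decide

lemma nonempty_inter_of_abs_sub_le {ι : Type*} {x x' r r' : ι → ℝ} (hr : ∀ j, 0 ≤ r j)
    (hr' : ∀ j, 0 ≤ r' j) (h : ∀ j, |x j - x' j| ≤ r j + r' j) :
    ({y : ι → ℝ | ∀ j, |y j - x j| ≤ r j} ∩ {y | ∀ j, |y j - x' j| ≤ r' j}).Nonempty := by
  refine ⟨fun j => max (x j - r j) (x' j - r' j), fun j => ?_, fun j => ?_⟩ <;>
  · have := abs_le.1 (h j)
    have := hr j
    have := hr' j
    rw [abs_le]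
    obtain ⟨hm, _⟩ | ⟨hm, _⟩ := max_cases (x j - r j) (x' j - r' j) <;>
      constructor <;> linarith

section

variable {k α : ℝ}

lemma sideLen_longAxis (o : Orient) : sideLen k α o (longAxis o) = k := by
  obtain ⟨i, b⟩ := o
  cases b <;> fin_cases i <;> simp [sideLen, longAxis]

lemma sideLen_of_ne {o : Orient} {j : Fin 3} (hi : j ≠ o.1) (hl : j ≠ longAxis o) :
    sideLen k α o j = k ^ α := by
  obtain ⟨i, b⟩ := o
  cases b <;> fin_cases i <;> fin_cases j <;> simp_all [sideLen, longAxis]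

lemma sideLen_nonneg (hk : 0 ≤ k) (o : Orient) (j : Fin 3) : 0 ≤ sideLen k α o j := by
  unfold sideLen
  split_ifs <;> positivity

lemma rpow_le_sideLen_add_sideLen (hk : 0 ≤ k) {o o' : Orient} {j : Fin 3} (ho : o.1 ≠ o'.1)
    (hl : j ≠ longAxis o) (hl' : j ≠ longAxis o') :
    k ^ α ≤ sideLen k α o j + sideLen k α o' j := by
  have := sideLen_nonneg (α := α) hk o j
  have := sideLen_nonneg (α := α) hk o' j
  by_cases hj : j = o.1
  · rw [sideLen_of_ne (hj ▸ ho) hl']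
    linarith
  · rw [sideLen_of_ne hj hl]
    linarith

lemma exists_lt_abs_sub_of_not_intersects (hk : 0 ≤ k) {p q : Plate}
    (h : ¬ Intersects k α p q) :
    ∃ j, sideLen k α p.2 j / 2 + sideLen k α q.2 j / 2 < |p.1 j - q.1 j| := by
  by_contra! hle
  refine h (nonempty_inter_of_abs_sub_le (fun j => ?_) (fun j => ?_) hle) <;>
    linarith [sideLen_nonneg (α := α) hk p.2 j, sideLen_nonneg (α := α) hk q.2 j]

lemma exists_separating_axis (hk : 0 ≤ k) {p q : Plate} (h : ¬ Intersects k α p q)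
    (hclose : ∀ j, |p.1 j - q.1 j| ≤ k / 2) :
    ∃ j, j ≠ longAxis p.2 ∧ j ≠ longAxis q.2 ∧
      sideLen k α p.2 j / 2 + sideLen k α q.2 j / 2 < |p.1 j - q.1 j| := by
  obtain ⟨j, hj⟩ := exists_lt_abs_sub_of_not_intersects hk h
  refine ⟨j, ?_, ?_, hj⟩ <;> rintro rfl <;> rw [sideLen_longAxis] at hj <;>
    linarith [hclose (longAxis p.2), hclose (longAxis q.2),
      sideLen_nonneg (α := α) hk p.2 (longAxis q.2), sideLen_nonneg (α := α) hk q.2 (longAxis p.2)]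

lemma TypicalIn.exists_mem {M : ℕ} {c : Pt} {P : Finset Plate} {v : Fin 3 → Fin M}
    {i : Fin 3} (h : TypicalIn k α c P v i) (b : Bool) :
    ∃ x ∈ pebbleBox k α c v, (x, (i, b)) ∈ P := by
  obtain ⟨⟨x, _, b₁⟩, hp, ⟨x', _, b₂⟩, hp', hne, rfl, rfl, hx, hx'⟩ := h
  have hb : b₁ ≠ b₂ := fun h => hne (by rw [h])
  by_cases h₁ : b = b₁
  · exact ⟨x, hx, h₁ ▸ hp⟩
  · have h₂ : b = b₂ := (Bool.eq_not_of_ne h₁).trans (Bool.eq_not_of_ne hb.symm).symm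
    exact ⟨x', hx', h₂ ▸ hp'⟩

lemma abs_sub_le_of_mem_pebbleBox {M : ℕ} {c x x' : Pt} {v v' : Fin 3 → Fin M}
    {j : Fin 3} (hx : x ∈ pebbleBox k α c v) (hx' : x' ∈ pebbleBox k α c v') (hj : v j = v' j) :
    |x j - x' j| ≤ k ^ α / 2 := by
  obtain ⟨h₁, h₂⟩ := hx j
  obtain ⟨h₁', h₂'⟩ := hx' j
  rw [← hj] at h₁' h₂'
  exact abs_sub_le_iff.2 ⟨by linarith, by linarith⟩

end

/-- **Property (*1): typical pebbles in a common tile have equal types.**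
Let `k^{1-α} = M` be a positive integer and let `Δ` be the cube of corner `c`
and side `k/2`, partitioned into the `M³` pebbles of side `k^α/2`.  If `P` is a
configuration of pairwise non-intersecting plates with centers in `Δ`, and two
pebbles lying in a common tile (i.e. in the same layer orthogonal to some
direction `d`) are typical of types `i` and `i'`, then `i = i'`. -/
theorem typical_pebbles_in_common_tile :
    ∀ k α : ℝ, 1 < k → α ∈ Set.Ioc (3/4 : ℝ) 1 →
    ∀ M : ℕ, 0 < M → (M : ℝ) = k ^ (1 - α) →
    ∀ c : Pt, ∀ P : Finset Plate,
      (∀ p ∈ P, ∀ p' ∈ P, p ≠ p' → ¬ Intersects k α p p') →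
      (∀ p ∈ P, ∀ j, c j ≤ p.1 j ∧ p.1 j ≤ c j + k / 2) →
      ∀ v v' : Fin 3 → Fin M, ∀ i i' : Fin 3, ∀ d : Fin 3,
        v d = v' d → TypicalIn k α c P v i → TypicalIn k α c P v' i' → i = i' := by
  intro k α hk _ M _ _ c P hP hΔ v v' i i' d hd hT hT'
  by_contra hne
  have hk₀ : 0 ≤ k := by linarith
  obtain ⟨b, b', hcover⟩ := exists_longAxis_ne_eq i i' d hne
  obtain ⟨x, hx, hxP⟩ := hT.exists_mem b
  obtain ⟨x', hx', hx'P⟩ := hT'.exists_mem b'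
  have hdisj : ¬ Intersects k α (x, (i, b)) (x', (i', b')) := hP _ hxP _ hx'P (by simp [hne])
  have hclose (j : Fin 3) : |x j - x' j| ≤ k / 2 := by
    obtain ⟨h₁, h₂⟩ := hΔ _ hxP j
    obtain ⟨h₁', h₂'⟩ := hΔ _ hx'P j
    exact abs_sub_le_iff.2 ⟨by linarith, by linarith⟩
  obtain ⟨j, hj, hj', hsep⟩ := exists_separating_axis hk₀ hdisj hclose
  obtain rfl := hcover j hj hj'
  linarith [abs_sub_le_of_mem_pebbleBox hx hx' hd,
    rpow_le_sideLen_add_sideLen (α := α) hk₀ hne hj hj']
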